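/- arXiv:1709.05134 — 2 statements merged into one kernel-verified Lean document; each statement's English description precedes it below -/
import Mathlib

section
/- If b₁ is the BMS transformation with data (M₁, α₁) and b₂ is the BMS transformation with data (M₂, α₂), then the composite b₂ ∘ b₁ is the BMS transformation with data (M₂·M₁, α₁ + σ_{M₁}(α₂)); in particular its conformal factor satisfies K_{M₂·M₁}(p) = K_{M₂}(M₁ • p) · K_{M₁}(p) for all p ∈ ℙ¹(ℂ). -/
noncomputable section

open Matrix

/-- `SL(2, ℂ)`. -/
abbrev SL2C := Matrix.SpecialLinearGroup (Fin 2) ℂ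

/-- The complex projective line `ℙ¹(ℂ)`, the projectivization of `ℂ²`. -/
abbrev P1C := Projectivization ℂ (Fin 2 → ℂ)

instance : Fact (Even (Fintype.card (Fin 2))) := ⟨⟨1, rfl⟩⟩

/-- The squared standard Hermitian norm `‖v‖²` of `v ∈ ℂ²`. -/
def hermNormSq (v : Fin 2 → ℂ) : ℝ := (star v ⬝ᵥ v).re

theorem SL2C.mulVec_ne_zero (M : SL2C) {v : Fin 2 → ℂ} (hv : v ≠ 0) :
    (M : Matrix (Fin 2) (Fin 2) ℂ).mulVec v ≠ 0 := by
  intro h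
  apply hv
  have hMM : ((M⁻¹ : SL2C) : Matrix (Fin 2) (Fin 2) ℂ) * (M : Matrix (Fin 2) (Fin 2) ℂ) = 1 := by
    rw [← Matrix.SpecialLinearGroup.coe_mul, inv_mul_cancel,
      Matrix.SpecialLinearGroup.coe_one]
  calc v = (((M⁻¹ : SL2C) : Matrix (Fin 2) (Fin 2) ℂ) *
          (M : Matrix (Fin 2) (Fin 2) ℂ)).mulVec v := by rw [hMM, Matrix.one_mulVec]
    _ = ((M⁻¹ : SL2C) : Matrix (Fin 2) (Fin 2) ℂ).mulVec
          ((M : Matrix (Fin 2) (Fin 2) ℂ).mulVec v) := by rw [Matrix.mulVec_mulVec]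
    _ = 0 := by rw [h, Matrix.mulVec_zero]

/-- The action of `SL(2, ℂ)` on `ℙ¹(ℂ)`: `M • [v] = [M v]`. -/
def mobAct (M : SL2C) (p : P1C) : P1C :=
  Projectivization.mk ℂ ((M : Matrix (Fin 2) (Fin 2) ℂ).mulVec p.rep)
    (SL2C.mulVec_ne_zero M p.rep_nonzero)

/-- The conformal factor `K_M : ℙ¹(ℂ) → ℝ`, `K_M([v]) = ‖v‖² / ‖M v‖²`. -/
def Kconf (M : SL2C) (p : P1C) : ℝ :=
  hermNormSq p.rep / hermNormSq ((M : Matrix (Fin 2) (Fin 2) ℂ).mulVec p.rep)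

/-- The BMS transformation with data `(M, α)`:
`(p, u) ↦ (M • p, K_M(p)·(u + α(p)))`. -/
def bms (M : SL2C) (α : P1C → ℝ) : P1C × ℝ → P1C × ℝ :=
  fun q => (mobAct M q.1, Kconf M q.1 * (q.2 + α q.1))

/-- `σ_M(α)(p) = K_M(p)⁻¹ · α(M • p)`. -/
def sigmaAct (M : SL2C) (α : P1C → ℝ) : P1C → ℝ :=
  fun p => (Kconf M p)⁻¹ * α (mobAct M p)

/-- The BMS group `𝓑`, as the set of all BMS transformations. -/
def BMSSet : Set ((P1C × ℝ) → (P1C × ℝ)) := {f | ∃ M α, f = bms M α}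

/-- The supertranslations `𝓢`: BMS transformations with data `(1, α)`. -/
def Supertranslations : Set ((P1C × ℝ) → (P1C × ℝ)) := {f | ∃ α, f = bms 1 α}

/-- The 'Lorentz' elements `𝓛`: BMS transformations with data `(M, 0)`. -/
def LorentzSet : Set ((P1C × ℝ) → (P1C × ℝ)) := {f | ∃ M, f = bms M 0}

/-- The translation function `α_H([v]) = (vᴴ H v)/‖v‖²` attached to a Hermitian matrix `H`. -/
def transl (H : Matrix (Fin 2) (Fin 2) ℂ) : P1C → ℝ :=
  fun p => (star p.rep ⬝ᵥ H.mulVec p.rep).re / hermNormSq p.rep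

/-- `α : ℙ¹(ℂ) → ℝ` is a translation if `α = α_H` for some Hermitian `H`. -/
def IsTranslationFn (α : P1C → ℝ) : Prop :=
  ∃ H : Matrix (Fin 2) (Fin 2) ℂ, H.IsHermitian ∧ α = transl H

/-- The translation subgroup `𝓣`: BMS transformations with data `(±1, α_H)`. -/
def TranslSet : Set ((P1C × ℝ) → (P1C × ℝ)) :=
  {f | ∃ (M : SL2C) (α : P1C → ℝ), (M = 1 ∨ M = -1) ∧ IsTranslationFn α ∧ f = bms M α}

/-- `PSL(2, ℂ)`, the quotient of `SL(2, ℂ)` by its center `{1, -1}`. -/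
abbrev PSL2C := SL2C ⧸ Subgroup.center SL2C

/-- The good cut of a translation: the graph of `α_H` in `ℙ¹(ℂ) × ℝ`. -/
def goodCut (H : Matrix (Fin 2) (Fin 2) ℂ) : Set (P1C × ℝ) :=
  {q | q.2 = transl H q.1}


lemma hermNormSq_eq (v : Fin 2 → ℂ) : hermNormSq v = ∑ i, Complex.normSq (v i) := by
  simp only [hermNormSq, dotProduct, Complex.re_sum]
  refine Finset.sum_congr rfl fun i _ => ?_
  simp [Complex.normSq_apply, Complex.mul_re]

lemma hermNormSq_pos {v : Fin 2 → ℂ} (hv : v ≠ 0) : 0 < hermNormSq v := by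
  rw [hermNormSq_eq]
  have : ∃ i, v i ≠ 0 := by
    by_contra h; push_neg at h; exact hv (funext h)
  obtain ⟨i, hi⟩ := this
  exact Finset.sum_pos' (fun j _ => Complex.normSq_nonneg _)
    ⟨i, Finset.mem_univ i, Complex.normSq_pos.mpr hi⟩

lemma hermNormSq_smul (c : ℂ) (v : Fin 2 → ℂ) :
    hermNormSq (c • v) = Complex.normSq c * hermNormSq v := by
  simp [hermNormSq_eq, Complex.normSq_mul, Finset.mul_sum, mul_add]

lemma Kconf_mk (M : SL2C) (v : Fin 2 → ℂ) (hv : v ≠ 0) :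
    Kconf M (Projectivization.mk ℂ v hv) =
      hermNormSq v / hermNormSq ((M : Matrix (Fin 2) (Fin 2) ℂ).mulVec v) := by
  obtain ⟨a, ha⟩ := Projectivization.exists_smul_eq_mk_rep ℂ v hv
  unfold Kconf
  rw [← ha, Matrix.mulVec_smul, Units.smul_def, Units.smul_def, hermNormSq_smul, hermNormSq_smul]
  exact mul_div_mul_left _ _ (by simp)

lemma mobAct_mk (M : SL2C) (v : Fin 2 → ℂ) (hv : v ≠ 0) :
    mobAct M (Projectivization.mk ℂ v hv) =
      Projectivization.mk ℂ ((M : Matrix (Fin 2) (Fin 2) ℂ).mulVec v)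
        (SL2C.mulVec_ne_zero M hv) := by
  obtain ⟨a, ha⟩ := Projectivization.exists_smul_eq_mk_rep ℂ v hv
  unfold mobAct
  rw [Projectivization.mk_eq_mk_iff]
  exact ⟨a, by rw [← ha, Matrix.mulVec_smul]⟩

lemma Kconf_ne_zero (M : SL2C) (p : P1C) : Kconf M p ≠ 0 := by
  unfold Kconf
  exact div_ne_zero (hermNormSq_pos p.rep_nonzero).ne'
    (hermNormSq_pos (SL2C.mulVec_ne_zero M p.rep_nonzero)).ne'

lemma Kconf_cocycle (M₁ M₂ : SL2C) (p : P1C) :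
    Kconf (M₂ * M₁) p = Kconf M₂ (mobAct M₁ p) * Kconf M₁ p := by
  have h1 : (p.rep : Fin 2 → ℂ) ≠ 0 := p.rep_nonzero
  have h2 := SL2C.mulVec_ne_zero M₁ h1
  rw [show mobAct M₁ p = Projectivization.mk ℂ _ (SL2C.mulVec_ne_zero M₁ h1) from rfl,
    Kconf_mk]
  unfold Kconf
  rw [Matrix.SpecialLinearGroup.coe_mul, ← Matrix.mulVec_mulVec]
  rw [div_mul_div_comm, mul_comm (hermNormSq ((M₁ : Matrix (Fin 2) (Fin 2) ℂ) *ᵥ p.rep)),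
    mul_div_mul_right _ _ (hermNormSq_pos h2).ne']

lemma mobAct_mul (M₁ M₂ : SL2C) (p : P1C) :
    mobAct (M₂ * M₁) p = mobAct M₂ (mobAct M₁ p) := by
  have h1 : (p.rep : Fin 2 → ℂ) ≠ 0 := p.rep_nonzero
  rw [show mobAct M₁ p = Projectivization.mk ℂ _ (SL2C.mulVec_ne_zero M₁ h1) from rfl,
    mobAct_mk]
  unfold mobAct
  congr 1
  rw [Matrix.SpecialLinearGroup.coe_mul, ← Matrix.mulVec_mulVec]

/-- The composite of the BMS transformations with data `(M₁, α₁)` and `(M₂, α₂)` is the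
BMS transformation with data `(M₂·M₁, α₁ + σ_{M₁}(α₂))`; in particular the conformal
factor satisfies the cocycle identity `K_{M₂·M₁}(p) = K_{M₂}(M₁ • p) · K_{M₁}(p)`. -/
theorem bms_comp (M₁ M₂ : SL2C) (α₁ α₂ : P1C → ℝ) :
    (bms M₂ α₂) ∘ (bms M₁ α₁) = bms (M₂ * M₁) (α₁ + sigmaAct M₁ α₂) ∧
    (∀ p : P1C, Kconf (M₂ * M₁) p = Kconf M₂ (mobAct M₁ p) * Kconf M₁ p) := by
  constructor
  · funext q
    obtain ⟨p, u⟩ := q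
    simp only [Function.comp_apply, bms, mobAct_mul, Prod.mk.injEq, true_and]
    rw [Kconf_cocycle]
    have h := Kconf_ne_zero M₁ p
    simp only [Pi.add_apply, sigmaAct]
    field_simp
    ring
  · exact Kconf_cocycle M₁ M₂
end
end

section
/- Let a, b, c, d ∈ ℂ with a·d − b·c = 1, let A, C ∈ ℝ and B ∈ ℂ, and let ζ ∈ ℂ with c·ζ + d ≠ 0; set ζ' = (a·ζ + b)/(c·ζ + d). Then (A + B·ζ + conj(B)·conj(ζ) + C·|ζ|²)/(|a·ζ + b|² + |c·ζ + d|²) = (A' + B'·ζ' + conj(B')·conj(ζ') + C'·|ζ'|²)/(1 + |ζ'|²), where A' = A·|a|² − B·b·conj(a) − conj(B)·conj(b)·a + C·|b|², B' = B·d·conj(a) + conj(B)·conj(b)·c − A·conj(a)·c − C·d·conj(b), and C' = A·|c|² − B·conj(c)·d − conj(B)·c·conj(d) + C·|d|². In particular A' and C' are real, so a Lorentz (fractional-linear) transformation maps the family of good-cut functions to itself with the stated coefficient transformation. -/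
/-!
Write `ζ = z / w` in homogeneous coordinates. The numerator of a good cut is then the value at
`(ζ, 1)` of the Hermitian form `A |w|² + B z w̄ + B̄ z̄ w + C |z|²`, which is homogeneous of
bidegree `(1, 1)`, and `(A', B', C')` is this form pulled back along the inverse of
`(z, w) ↦ (a z + b w, c z + d w)`. Evaluating at `(a ζ + b, c ζ + d) = (c ζ + d) · (ζ', 1)`
multiplies numerator and denominator by the same factor `|c ζ + d|²`.
-/

noncomputable section

open Complex ComplexConjugate

namespace GoodCut

def form (A B C z w : ℂ) : ℂ :=
  A * normSq w + B * z * conj w + conj B * conj z * w + C * normSq z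

theorem form_one (A B C ζ : ℂ) :
    form A B C ζ 1 = A + B * ζ + conj B * conj ζ + C * normSq ζ := by
  simp [form]

theorem form_mul (A B C z w t : ℂ) :
    form A B C (z * t) (w * t) = normSq t * form A B C z w := by
  simp only [form, ofReal_mul, ← mul_conj, map_mul]
  ring

-- `form A B C z w = vᴴ H v` with `v = (w, z)` and `H = [[A, B], [B̄, C]]`; the new coefficients
-- are those of `adj(N)ᴴ H adj(N)` for `N = [[d, c], [b, a]]`, whence the factor `|det N|²`.
theorem form_linearFractional (a b c d : ℂ) (A C : ℝ) (B z w : ℂ) :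
    form (A * normSq a - B * b * conj a - conj B * conj b * a + C * normSq b)
        (B * d * conj a + conj B * conj b * c - A * conj a * c - C * d * conj b)
        (A * normSq c - B * conj c * d - conj B * c * conj d + C * normSq d)
        (a * z + b * w) (c * z + d * w) =
      normSq (a * d - b * c) * form A B C z w := by
  simp only [form, ← mul_conj, map_add, map_sub, map_mul, conj_conj, conj_ofReal]
  ring

theorem normSq_add_normSq_eq_mul (z w : ℂ) (hw : w ≠ 0) :
    (normSq z : ℂ) + normSq w = normSq w * (1 + normSq (z / w)) := by
  rw [normSq_div, ofReal_div]
  have : (normSq w : ℂ) ≠ 0 := by exact_mod_cast normSq_pos.mpr hw |>.ne'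
  field_simp
  ring

end GoodCut

open GoodCut in
/-- A fractional-linear (Lorentz) transformation maps the family of good-cut functions
to itself: with `ζ' = (a·ζ + b)/(c·ζ + d)` and the stated coefficient transformation
`(A, B, C) ↦ (A', B', C')`, the good-cut function is re-expressed in the new coordinate,
and `A'`, `C'` are real. -/
theorem good_cut_coefficient_transformation
    (a b c d : ℂ) (h : a * d - b * c = 1) (A C : ℝ) (B : ℂ) (ζ : ℂ)
    (hζ : c * ζ + d ≠ 0) :
    let ζ' : ℂ := (a * ζ + b) / (c * ζ + d)
    let A' : ℂ := (A : ℂ) * (normSq a : ℂ) - B * b * (starRingEnd ℂ) a -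
      (starRingEnd ℂ) B * (starRingEnd ℂ) b * a + (C : ℂ) * (normSq b : ℂ)
    let B' : ℂ := B * d * (starRingEnd ℂ) a + (starRingEnd ℂ) B * (starRingEnd ℂ) b * c -
      (A : ℂ) * (starRingEnd ℂ) a * c - (C : ℂ) * d * (starRingEnd ℂ) b
    let C' : ℂ := (A : ℂ) * (normSq c : ℂ) - B * (starRingEnd ℂ) c * d -
      (starRingEnd ℂ) B * c * (starRingEnd ℂ) d + (C : ℂ) * (normSq d : ℂ)
    ((A : ℂ) + B * ζ + (starRingEnd ℂ) B * (starRingEnd ℂ) ζ + (C : ℂ) * (normSq ζ : ℂ)) /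
        ((normSq (a * ζ + b) : ℂ) + (normSq (c * ζ + d) : ℂ)) =
      (A' + B' * ζ' + (starRingEnd ℂ) B' * (starRingEnd ℂ) ζ' + C' * (normSq ζ' : ℂ)) /
        (1 + (normSq ζ' : ℂ)) ∧
    (starRingEnd ℂ) A' = A' ∧ (starRingEnd ℂ) C' = C' := by
  intro ζ' A' B' C'
  have hw : (normSq (c * ζ + d) : ℂ) ≠ 0 := by exact_mod_cast (normSq_pos.mpr hζ).ne'
  have numerator : form A B C ζ 1 = normSq (c * ζ + d) * form A' B' C' ζ' 1 := by
    have hz : a * ζ + b = ζ' * (c * ζ + d) := (div_mul_cancel₀ _ hζ).symm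
    calc form A B C ζ 1
        = form A' B' C' (a * ζ + b * 1) (c * ζ + d * 1) := by
          rw [form_linearFractional, h, map_one, ofReal_one, one_mul]
      _ = normSq (c * ζ + d) * form A' B' C' ζ' 1 := by
          rw [mul_one, mul_one, hz, ← form_mul, one_mul]
  refine ⟨?_, ?_, ?_⟩
  · rw [← form_one, ← form_one, numerator, normSq_add_normSq_eq_mul _ _ hζ,
      mul_div_mul_left _ _ hw]
  all_goals simp only [A', C', map_sub, map_add, map_mul, conj_conj, conj_ofReal]; ring
end
end
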